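/- Let F = F_Y^Δ ∈ Σ and x ∈ A_F. A sequence (x_n) of points of A converges to x in Ā if and only if a(x_n) → a(x) for every a ∈ Y (where elements of ⟨Y⟩ are viewed as linear forms on A_F via the identification of the dual of A_F with ⟨Y⟩) and (λ₀(Δ) − λ)(x_n) → +∞ for every λ ∈ Λ with [λ₀(Δ) − λ] ⊄ Y. -/

import Mathlib

/-!
Common setup for Werner, "Compactifications of Bruhat-Tits buildings associated to
linear representations":  a finite-dimensional real vector space `A` (the apartment),
a root system `Φ` in the dual space together with a Weyl-group invariant inner
product, a finite Weyl-invariant set `Λ` of (K-)weights, and for every basis `Δ`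
of `Φ` a highest weight `lam0 Δ ∈ Λ`.
-/

open Pointwise Filter Topology Bornology
open scoped Classical

noncomputable section

/-- A set `M` of linear forms is *connected* if the graph with vertex set `M` and an
edge between `m` and `n` iff `inn m n ≠ 0` is connected. -/
def GraphConnected {D : Type*} (inn : D → D → ℝ) (M : Set D) : Prop :=
  ∀ m ∈ M, ∀ n ∈ M,
    Relation.ReflTransGen (fun x y => x ∈ M ∧ y ∈ M ∧ inn x y ≠ 0) m n

/-- The coefficients of `μ` as a linear combination of the elements of `Δ` (chosen
arbitrarily if one exists; it is unique when `Δ` is linearly independent). -/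
noncomputable def coeffs {A : Type*} [AddCommGroup A] [Module ℝ A]
    (Δ : Finset (Module.Dual ℝ A)) (μ : Module.Dual ℝ A) : Module.Dual ℝ A → ℝ :=
  if h : ∃ n : Module.Dual ℝ A → ℝ, μ = ∑ b ∈ Δ, n b • b then h.choose else fun _ => 0

/-- The support `[μ]` of `μ` with respect to the basis `Δ`: the set of elements of `Δ`
whose coefficient in `μ` is nonzero. -/
noncomputable def supp {A : Type*} [AddCommGroup A] [Module ℝ A]
    (Δ : Finset (Module.Dual ℝ A)) (μ : Module.Dual ℝ A) : Finset (Module.Dual ℝ A) :=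
  Δ.filter fun a => coeffs Δ μ a ≠ 0

/-- Raw data: a finite set `Φ` of roots in the dual of `A`, a product `inn` on the dual,
a finite set `Λ` of weights, and a highest weight `lam0 Δ` for every basis `Δ`. -/
structure RootWeightData (A : Type*) [NormedAddCommGroup A] [NormedSpace ℝ A]
    [FiniteDimensional ℝ A] where
  Φ : Finset (Module.Dual ℝ A)
  inn : Module.Dual ℝ A → Module.Dual ℝ A → ℝ
  Λ : Finset (Module.Dual ℝ A)
  lam0 : Finset (Module.Dual ℝ A) → Module.Dual ℝ A

namespace RootWeightData

variable {A : Type*} [NormedAddCommGroup A] [NormedSpace ℝ A] [FiniteDimensional ℝ A]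
variable (S : RootWeightData A)

/-- The reflection associated to the root `a`. -/
def refl (a : Module.Dual ℝ A) : Function.End (Module.Dual ℝ A) :=
  fun x => x - (2 * S.inn x a / S.inn a a) • a

/-- The Weyl group `W`, generated by the reflections in the roots. -/
def weyl : Submonoid (Function.End (Module.Dual ℝ A)) :=
  Submonoid.closure {f | ∃ a ∈ S.Φ, f = S.refl a}

/-- `Δ` is a basis of the root system `Φ`: a linearly independent subset of `Φ` such
that every root is a nonnegative or nonpositive linear combination of `Δ`. -/
def IsBase (Δ : Finset (Module.Dual ℝ A)) : Prop :=
  (↑Δ : Set (Module.Dual ℝ A)) ⊆ (S.Φ : Set (Module.Dual ℝ A)) ∧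
  LinearIndependent ℝ (fun a : (Δ : Set (Module.Dual ℝ A)) => (a : Module.Dual ℝ A)) ∧
  ∀ a ∈ S.Φ,
    (∃ n : Module.Dual ℝ A → ℝ, (∀ b ∈ Δ, 0 ≤ n b) ∧ a = ∑ b ∈ Δ, n b • b) ∨
    (∃ n : Module.Dual ℝ A → ℝ, (∀ b ∈ Δ, 0 ≤ n b) ∧ a = -∑ b ∈ Δ, n b • b)

/-- `Y` is an admissible subset of the basis `Δ`: `Y ⊆ Δ` and `Y ∪ {λ₀(Δ)}` is
connected. -/
def Admissible (Δ Y : Finset (Module.Dual ℝ A)) : Prop :=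
  Y ⊆ Δ ∧ GraphConnected S.inn ((↑Y : Set (Module.Dual ℝ A)) ∪ {S.lam0 Δ})

end RootWeightData

/-- The whole setting of Werner's paper: the data of `RootWeightData`, where `Φ` is a
(crystallographic, possibly non-reduced) root system spanning the dual of `A`, `inn` is
a Weyl-invariant inner product, `Λ` is a finite Weyl-invariant set of weights, and
`lam0` picks, Weyl-equivariantly, a highest weight for each basis, dominating all of
`Λ`; moreover a subset of a basis is admissible iff it is the support of
`λ₀(Δ) - λ` for some weight `λ`. -/
structure RootWeightSystem (A : Type*) [NormedAddCommGroup A] [NormedSpace ℝ A]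
    [FiniteDimensional ℝ A] extends RootWeightData A where
  inn_symm : ∀ x y, inn x y = inn y x
  inn_add_left : ∀ x y z, inn (x + y) z = inn x z + inn y z
  inn_smul_left : ∀ (c : ℝ) (x y), inn (c • x) y = c * inn x y
  inn_pos : ∀ x, x ≠ 0 → 0 < inn x x
  root_ne_zero : ∀ a ∈ Φ, a ≠ (0 : Module.Dual ℝ A)
  neg_mem : ∀ a ∈ Φ, -a ∈ Φ
  refl_mem : ∀ a ∈ Φ, ∀ b ∈ Φ, toRootWeightData.refl a b ∈ Φ
  inn_weyl_invariant :
    ∀ w ∈ toRootWeightData.weyl, ∀ x y, inn (w x) (w y) = inn x y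
  phi_spans : Submodule.span ℝ (Φ : Set (Module.Dual ℝ A)) = ⊤
  exists_base : ∃ Δ, toRootWeightData.IsBase Δ
  base_cover : ∀ x : A, ∃ Δ, toRootWeightData.IsBase Δ ∧ ∀ a ∈ Δ, 0 ≤ a x
  base_weyl : ∀ w ∈ toRootWeightData.weyl, ∀ Δ, toRootWeightData.IsBase Δ →
    toRootWeightData.IsBase (Δ.image (w : Module.Dual ℝ A → Module.Dual ℝ A))
  lam0_mem : ∀ Δ, toRootWeightData.IsBase Δ → lam0 Δ ∈ Λ
  lam0_dominates : ∀ Δ, toRootWeightData.IsBase Δ → ∀ l ∈ Λ,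
    ∃ n : Module.Dual ℝ A → ℝ, (∀ a ∈ Δ, 0 ≤ n a) ∧ lam0 Δ - l = ∑ a ∈ Δ, n a • a
  weight_weyl_invariant : ∀ w ∈ toRootWeightData.weyl, ∀ l ∈ Λ, w l ∈ Λ
  lam0_equivariant : ∀ w ∈ toRootWeightData.weyl, ∀ Δ, toRootWeightData.IsBase Δ →
    lam0 (Δ.image (w : Module.Dual ℝ A → Module.Dual ℝ A)) = w (lam0 Δ)
  integrality : ∀ l ∈ Λ, ∀ a ∈ Φ, ∃ k : ℤ, 2 * inn l a / inn a a = (k : ℝ)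
  admissible_iff_support : ∀ Δ, toRootWeightData.IsBase Δ → ∀ Y ⊆ Δ,
    (toRootWeightData.Admissible Δ Y ↔ ∃ l ∈ Λ, supp Δ (lam0 Δ - l) = Y)

namespace RootWeightSystem

variable {A : Type*} [NormedAddCommGroup A] [NormedSpace ℝ A] [FiniteDimensional ℝ A]
variable (S : RootWeightSystem A)

/-- The face `F_Y^Δ` of the apartment `A` associated to a basis `Δ` and an admissible
subset `Y ⊆ Δ`. -/
def Face (Δ Y : Finset (Module.Dual ℝ A)) : Set A :=
  {x | (∀ a ∈ Y, a x = 0) ∧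
    ∀ l ∈ S.Λ, ¬ supp Δ (S.lam0 Δ - l) ⊆ Y → 0 < (S.lam0 Δ - l) x}

/-- `F` belongs to the collection `Σ` of faces. -/
def IsFace (F : Set A) : Prop :=
  ∃ Δ Y, S.toRootWeightData.IsBase Δ ∧ S.toRootWeightData.Admissible Δ Y ∧
    F = S.Face Δ Y

/-- The collection `Σ` of all faces. -/
def Faces : Type _ := {F : Set A // S.IsFace F}

/-- The relation identifying `(F, u)` and `(F, v)` when `u - v ∈ ⟨F⟩`; the quotient is
the disjoint union `Ā = ⊔_{F ∈ Σ} A/⟨F⟩`. -/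
def AbarRel (p q : S.Faces × A) : Prop :=
  p.1 = q.1 ∧ p.2 - q.2 ∈ Submodule.span ℝ p.1.val

/-- The compactified apartment `Ā = ⊔_{F ∈ Σ} A_F`, `A_F = A/⟨F⟩`. -/
def Abar : Type _ := Quot S.AbarRel

/-- `r_F(u)`, the image of `u ∈ A` in the stratum `A_F` of `Ā`. -/
def mkAbar (F : S.Faces) (u : A) : S.Abar := Quot.mk _ (F, u)

/-- The basic set `Γ_F(U) = ⋃_{F' ⊆ cl F} r_{F'}(U + F)` of `Ā`. -/
def Gamma (F : S.Faces) (U : Set A) : Set S.Abar :=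
  {p | ∃ F' : S.Faces, F'.val ⊆ closure F.val ∧ ∃ u ∈ U + F.val, p = S.mkAbar F' u}

/-- The topology of `Ā`, generated by the sets `Γ_F(U)` for `F ∈ Σ` and `U ⊆ A`
bounded and open. -/
instance : TopologicalSpace S.Abar :=
  TopologicalSpace.generateFrom
    {V : Set S.Abar | ∃ (F : S.Faces) (U : Set A),
      IsOpen U ∧ IsBounded U ∧ V = S.Gamma F U}

/-- `f_Ω(a) = inf {t : Ω ⊆ cl_Ā {z ∈ A : a(z) ≥ -t}} ∈ ℝ ∪ {±∞}`, where `A` is embedded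
in `Ā` as the stratum of the face `F₀ = {0}`. -/
def fOmega (F₀ : S.Faces) (Ω : Set S.Abar) (a : Module.Dual ℝ A) : EReal :=
  sInf ((fun t : ℝ => (t : EReal)) ''
    {t : ℝ | Ω ⊆ closure (S.mkAbar F₀ '' {z : A | -t ≤ a z})})

end RootWeightSystem


variable {A : Type*} [NormedAddCommGroup A] [NormedSpace ℝ A] [FiniteDimensional ℝ A]


/-! The basic neighbourhoods of `r_F(u)` are the sets `Γ_G(U)` with `F ⊆ cl G` and
`u ∈ U + G + ⟨F⟩`, and a point of `A` lies in `Γ_G(U)` iff it lies in `U + G`. On `F` the forms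
of `Y` vanish and the forms `λ₀(Δ) - λ` with `[λ₀(Δ) - λ] ⊄ Y` are positive, so the
neighbourhoods `Γ_F(U)` with `U` slid along `⟨F⟩` force the former to converge and the latter to
diverge along `x_n`. Conversely, for `v ∈ U + G`, subtracting from `x_n - v` a null sequence with
the same `Y`-coordinates leaves a sequence that eventually lies in `F ⊆ cl G`, and
`G + cl G ⊆ G`. -/

open Module

theorem LinearMap.pi_surjective_of_linearIndependent {ι K V : Type*} [Finite ι] [Field K]
    [AddCommGroup V] [Module K V] {f : ι → Dual K V} (hf : LinearIndependent K f) :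
    Function.Surjective (LinearMap.pi f) := by
  have hcoe : LinearIndependent K fun i => ⇑(f i) :=
    hf.map' (LinearMap.ltoFun K V K K) (LinearMap.ker_eq_bot.2 DFunLike.coe_injective)
  rw [← LinearMap.range_eq_top, eq_top_iff, ← span_flip_eq_top_iff_linearIndependent.2 hcoe,
    Submodule.span_le]
  rintro _ ⟨z, rfl⟩
  exact ⟨z, rfl⟩

theorem exists_forall_apply_eq_of_linearIndepOn {M : Type*} [AddCommGroup M] [Module ℝ M]
    {Y : Finset (Dual ℝ M)} (hY : LinearIndepOn ℝ id (Y : Set (Dual ℝ M))) (g : Dual ℝ M → ℝ) :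
    ∃ z : M, ∀ a ∈ Y, a z = g a := by
  obtain ⟨z, hz⟩ := LinearMap.pi_surjective_of_linearIndependent
    (f := fun a : (Y : Set (Dual ℝ M)) => (a : Dual ℝ M)) hY fun a => g a
  exact ⟨z, fun a ha => congr_fun hz ⟨a, ha⟩⟩

theorem exists_tendsto_zero_forall_apply_eq {E ι : Type*} [NormedAddCommGroup E]
    [NormedSpace ℝ E] {Y : Finset (Dual ℝ E)} (hY : LinearIndepOn ℝ id (Y : Set (Dual ℝ E)))
    {l : Filter ι} {d : ι → E} (hd : ∀ a ∈ Y, Tendsto (fun n => a (d n)) l (𝓝 0)) :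
    ∃ e : ι → E, Tendsto e l (𝓝 0) ∧ ∀ n, ∀ a ∈ Y, a (e n) = a (d n) := by
  set L := LinearMap.pi fun a : (Y : Set (Dual ℝ E)) => (a : Dual ℝ E)
  obtain ⟨R, hR⟩ := L.exists_rightInverse_of_surjective
    (LinearMap.range_eq_top.2 (LinearMap.pi_surjective_of_linearIndependent hY))
  refine ⟨fun n => R (L (d n)), ?_,
    fun n a ha => congr_fun (LinearMap.congr_fun hR (L (d n))) ⟨a, ha⟩⟩
  have hLd : Tendsto (fun n => L (d n)) l (𝓝 0) := tendsto_pi_nhds.2 fun a => hd a a.2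
  exact ((LinearMap.continuous_of_finiteDimensional R).tendsto' 0 0 (map_zero R)).comp hLd

theorem coeffs_eq_of_linearIndepOn {M : Type*} [AddCommGroup M] [Module ℝ M]
    {T : Finset (Dual ℝ M)} (hT : LinearIndepOn ℝ id (T : Set (Dual ℝ M)))
    {μ : Dual ℝ M} {n : Dual ℝ M → ℝ} (h : μ = ∑ b ∈ T, n b • b) :
    ∀ b ∈ T, coeffs T μ b = n b := by
  have hex : ∃ m : Dual ℝ M → ℝ, μ = ∑ b ∈ T, m b • b := ⟨n, h⟩
  rw [coeffs, dif_pos hex]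
  exact linearIndepOn_finset_iffₛ.mp hT _ _ (hex.choose_spec.symm.trans h)

namespace RootWeightSystem

variable {S : RootWeightSystem A} {Δ Y : Finset (Dual ℝ A)}

theorem lam0_sub_apply_pos (hΔ : S.IsBase Δ) {ν : Dual ℝ A} (hν : ν ∈ S.Λ)
    (hs : ¬ supp Δ (S.lam0 Δ - ν) ⊆ Y) {z : A} (hz : ∀ b ∈ Δ, 0 ≤ b z)
    (hzY : ∀ b ∈ Δ, b ∉ Y → 0 < b z) : 0 < (S.lam0 Δ - ν) z := by
  obtain ⟨n, hn, hrep⟩ := S.lam0_dominates Δ hΔ ν hν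
  obtain ⟨b, hb, hbY⟩ := Finset.not_subset.1 hs
  obtain ⟨hbΔ, hnb⟩ := Finset.mem_filter.1 hb
  rw [coeffs_eq_of_linearIndepOn hΔ.2.1 hrep b hbΔ] at hnb
  rw [hrep, LinearMap.sum_apply]
  simp only [LinearMap.smul_apply, smul_eq_mul]
  exact Finset.sum_pos' (fun c hc => mul_nonneg (hn c hc) (hz c hc))
    ⟨b, hbΔ, mul_pos ((hn b hbΔ).lt_of_ne' hnb) (hzY b hbΔ hbY)⟩

theorem face_nonempty (hΔ : S.IsBase Δ) (hYΔ : Y ⊆ Δ) : (S.Face Δ Y).Nonempty := by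
  obtain ⟨f, hf⟩ :=
    exists_forall_apply_eq_of_linearIndepOn hΔ.2.1 fun b => if b ∈ Y then 0 else 1
  refine ⟨f, fun a ha => by simp [hf a (hYΔ ha), ha], fun ν hν hs => ?_⟩
  refine lam0_sub_apply_pos hΔ hν hs (fun b hb => ?_) fun b hb hbY => by simp [hf b hb, hbY]
  rw [hf b hb]
  split_ifs <;> norm_num

theorem smul_mem_face {g : A} (hg : g ∈ S.Face Δ Y) {t : ℝ} (ht : 0 < t) :
    t • g ∈ S.Face Δ Y :=
  ⟨fun a ha => by simp [hg.1 a ha], fun ν hν hs => by simpa using mul_pos ht (hg.2 ν hν hs)⟩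

theorem zero_mem_closure_face {g : A} (hg : g ∈ S.Face Δ Y) :
    (0 : A) ∈ closure (S.Face Δ Y) := by
  have h : Tendsto (fun t : ℝ => t • g) (𝓝[>] 0) (𝓝 0) := by
    simpa using ((tendsto_id (x := 𝓝 (0 : ℝ))).smul_const g).mono_left nhdsWithin_le_nhds
  exact mem_closure_of_tendsto h (eventually_nhdsWithin_of_forall fun t ht => smul_mem_face hg ht)

theorem closure_face_subset :
    closure (S.Face Δ Y) ⊆ {z | (∀ a ∈ Y, a z = 0) ∧
      ∀ ν ∈ S.Λ, ¬ supp Δ (S.lam0 Δ - ν) ⊆ Y → 0 ≤ (S.lam0 Δ - ν) z} := by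
  intro z hz
  have hcont (φ : Dual ℝ A) : Continuous φ := LinearMap.continuous_of_finiteDimensional φ
  refine ⟨fun a ha => ?_, fun ν hν hs => ?_⟩
  · exact closure_minimal (fun w hw => hw.1 a ha) (isClosed_eq (hcont a) continuous_const) hz
  · exact closure_minimal (fun w hw => (hw.2 ν hν hs).le)
      (isClosed_le continuous_const (hcont _)) hz

theorem add_mem_face {g p : A} (hg : g ∈ S.Face Δ Y) (hp : p ∈ closure (S.Face Δ Y)) :
    g + p ∈ S.Face Δ Y := by
  obtain ⟨hp0, hpΛ⟩ := closure_face_subset hp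
  exact ⟨fun a ha => by simp [hg.1 a ha, hp0 a ha],
    fun ν hν hs => by rw [map_add]; exact add_pos_of_pos_of_nonneg (hg.2 ν hν hs) (hpΛ ν hν hs)⟩

theorem exists_tendsto_zero_eventually_sub_mem_face (hΔ : S.IsBase Δ) (hYΔ : Y ⊆ Δ)
    {ι : Type*} {l : Filter ι} {d : ι → A} (hdY : ∀ a ∈ Y, Tendsto (fun n => a (d n)) l (𝓝 0))
    (hdΛ : ∀ ν ∈ S.Λ, ¬ supp Δ (S.lam0 Δ - ν) ⊆ Y →
      Tendsto (fun n => (S.lam0 Δ - ν) (d n)) l atTop) :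
    ∃ e : ι → A, Tendsto e l (𝓝 0) ∧ ∀ᶠ n in l, d n - e n ∈ S.Face Δ Y := by
  have hΔli : LinearIndepOn ℝ id (Δ : Set (Dual ℝ A)) := hΔ.2.1
  obtain ⟨e, he, hae⟩ := exists_tendsto_zero_forall_apply_eq (hΔli.mono hYΔ) hdY
  refine ⟨e, he, ?_⟩
  have hpos : ∀ ν ∈ S.Λ, ∀ᶠ n in l,
      ¬ supp Δ (S.lam0 Δ - ν) ⊆ Y → 0 < (S.lam0 Δ - ν) (d n - e n) := by
    intro ν hν
    by_cases hs : supp Δ (S.lam0 Δ - ν) ⊆ Y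
    · exact Eventually.of_forall fun _ h => absurd hs h
    have hμe : Tendsto (fun n => -(S.lam0 Δ - ν) (e n)) l (𝓝 0) := by
      simpa using (((LinearMap.continuous_of_finiteDimensional (S.lam0 Δ - ν)).tendsto 0).comp
        he).neg
    filter_upwards [((hdΛ ν hν hs).atTop_add hμe).eventually_gt_atTop 0] with n hn
    intro _
    rw [map_sub, sub_eq_add_neg]
    exact hn
  filter_upwards [eventually_all_finset _ |>.2 hpos] with n hn
  exact ⟨fun a ha => by rw [map_sub, hae n a ha, sub_self], hn⟩

theorem abarRel_equivalence : Equivalence S.AbarRel where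
  refl _ := ⟨rfl, by simp⟩
  symm := by
    rintro p q ⟨h1, h2⟩
    exact ⟨h1.symm, by rw [← h1, ← neg_sub]; exact Submodule.neg_mem _ h2⟩
  trans := by
    rintro p q r ⟨h1, h2⟩ ⟨h3, h4⟩
    refine ⟨h1.trans h3, ?_⟩
    rw [← sub_add_sub_cancel p.2 q.2 r.2]
    exact Submodule.add_mem _ h2 (h1 ▸ h4)

theorem mkAbar_eq_mkAbar_iff {F F' : S.Faces} {u v : A} :
    S.mkAbar F u = S.mkAbar F' v ↔ F = F' ∧ u - v ∈ Submodule.span ℝ F.val :=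
  ⟨fun h => abarRel_equivalence.eqvGen_iff.1 (Quot.eqvGen_exact h), fun h => Quot.sound h⟩

theorem mkAbar_mem_gamma_iff {F G : S.Faces} {U : Set A} {u : A} :
    S.mkAbar F u ∈ S.Gamma G U ↔
      F.val ⊆ closure G.val ∧ ∃ v ∈ U + G.val, u - v ∈ Submodule.span ℝ F.val := by
  constructor
  · rintro ⟨F', hF', v, hv, h⟩
    obtain ⟨rfl, hspan⟩ := mkAbar_eq_mkAbar_iff.1 h
    exact ⟨hF', v, hv, hspan⟩
  · rintro ⟨hF, v, hv, h⟩
    exact ⟨F, hF, v, hv, mkAbar_eq_mkAbar_iff.2 ⟨rfl, h⟩⟩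

theorem mkAbar_mem_gamma_iff_of_eq_zero {F₀ G : S.Faces} (hF₀ : F₀.val = {0}) {U : Set A}
    {u : A} : S.mkAbar F₀ u ∈ S.Gamma G U ↔ (0 : A) ∈ closure G.val ∧ u ∈ U + G.val := by
  simp [mkAbar_mem_gamma_iff, hF₀, sub_eq_zero]

theorem tendsto_nhds_mkAbar_iff {ι : Type*} {l : Filter ι} {z : ι → S.Abar} {F : S.Faces}
    {u : A} : Tendsto z l (𝓝 (S.mkAbar F u)) ↔
      ∀ (G : S.Faces) (U : Set A), IsOpen U → IsBounded U →
        S.mkAbar F u ∈ S.Gamma G U → ∀ᶠ n in l, z n ∈ S.Gamma G U := by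
  refine TopologicalSpace.tendsto_nhds_generateFrom_iff.trans ⟨?_, ?_⟩
  · exact fun h G U hU hb => h _ ⟨G, U, hU, hb, rfl⟩
  · rintro h _ ⟨G, U, hU, hb, rfl⟩
    exact h G U hU hb

variable {F₀ F : S.Faces} {ι : Type*} {l : Filter ι} {x : ι → A} {u : A}

/-- Witnessed by the neighbourhood `Γ_F(B(c, 1) ∩ {ψ > T})` of `r_F(u)`. -/
theorem eventually_lt_apply_of_tendsto (hF₀ : F₀.val = {0})
    (h : Tendsto (fun n => S.mkAbar F₀ (x n)) l (𝓝 (S.mkAbar F u))) (hF : F.val.Nonempty)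
    {ψ : Dual ℝ A} (hψ : ∀ z ∈ F.val, 0 ≤ ψ z) {c : A} (hc : u - c ∈ Submodule.span ℝ F.val)
    {T : ℝ} (hT : T < ψ c) : ∀ᶠ n in l, T < ψ (x n) := by
  obtain ⟨f, hf⟩ := hF
  set U := Metric.ball c 1 ∩ {z | T < ψ z}
  have hU : IsOpen U := Metric.isOpen_ball.inter
    (isOpen_lt continuous_const (LinearMap.continuous_of_finiteDimensional ψ))
  have hmem : S.mkAbar F u ∈ S.Gamma F U := by
    refine mkAbar_mem_gamma_iff.2 ⟨subset_closure, c + f,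
      Set.add_mem_add ⟨Metric.mem_ball_self one_pos, hT⟩ hf, ?_⟩
    simpa [sub_add_eq_sub_sub] using sub_mem hc (Submodule.subset_span hf)
  filter_upwards [tendsto_nhds_mkAbar_iff.1 h F U hU
    (Metric.isBounded_ball.subset Set.inter_subset_left) hmem] with n hn
  obtain ⟨-, v, ⟨-, hv⟩, g, hg, hvg⟩ := (mkAbar_mem_gamma_iff_of_eq_zero hF₀).1 hn
  rw [← hvg, map_add]
  linarith [hψ g hg, show T < ψ v from hv]

theorem tendsto_apply_of_tendsto_mkAbar (hF₀ : F₀.val = {0})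
    (h : Tendsto (fun n => S.mkAbar F₀ (x n)) l (𝓝 (S.mkAbar F u))) (hΔ : S.IsBase Δ)
    (hYΔ : Y ⊆ Δ) (hF : F.val = S.Face Δ Y) {a : Dual ℝ A} (ha : a ∈ Y) :
    Tendsto (fun n => a (x n)) l (𝓝 (a u)) := by
  have hne : F.val.Nonempty := hF ▸ face_nonempty hΔ hYΔ
  have hvanish : ∀ z ∈ F.val, a z = 0 := fun z hz => (hF ▸ hz).1 a ha
  have hu : u - u ∈ Submodule.span ℝ F.val := by simp
  refine tendsto_order.2 ⟨fun T hT => ?_, fun T hT => ?_⟩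
  · exact eventually_lt_apply_of_tendsto hF₀ h hne (fun z hz => (hvanish z hz).ge) hu hT
  · filter_upwards [eventually_lt_apply_of_tendsto hF₀ h hne (ψ := -a)
      (fun z hz => by simp [hvanish z hz]) hu (T := -T) (by simpa using hT)] with n hn
    simpa using hn

theorem tendsto_atTop_apply_of_tendsto_mkAbar (hF₀ : F₀.val = {0})
    (h : Tendsto (fun n => S.mkAbar F₀ (x n)) l (𝓝 (S.mkAbar F u))) (hΔ : S.IsBase Δ)
    (hYΔ : Y ⊆ Δ) (hF : F.val = S.Face Δ Y) {ν : Dual ℝ A} (hν : ν ∈ S.Λ)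
    (hs : ¬ supp Δ (S.lam0 Δ - ν) ⊆ Y) :
    Tendsto (fun n => (S.lam0 Δ - ν) (x n)) l atTop := by
  obtain ⟨f, hf⟩ := face_nonempty (S := S) hΔ hYΔ
  set μ := S.lam0 Δ - ν
  have hμf : 0 < μ f := hf.2 ν hν hs
  refine tendsto_atTop.2 fun T => ?_
  set t := (T - μ u) / μ f + 1
  have hc : u - (u + t • f) ∈ Submodule.span ℝ F.val := by
    simpa using Submodule.smul_mem _ t (Submodule.subset_span (hF ▸ hf))
  have hT : T < μ (u + t • f) := by
    have : t * μ f = T - μ u + μ f := by rw [add_mul, div_mul_cancel₀ _ hμf.ne', one_mul]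
    simp only [map_add, map_smul, smul_eq_mul, this]
    linarith
  filter_upwards [eventually_lt_apply_of_tendsto hF₀ h ⟨f, hF ▸ hf⟩
    (fun z hz => ((hF ▸ hz).2 ν hν hs).le) hc hT] with n hn
  exact hn.le

theorem tendsto_mkAbar_of_tendsto_apply (hF₀ : F₀.val = {0}) (hΔ : S.IsBase Δ) (hYΔ : Y ⊆ Δ)
    (hF : F.val = S.Face Δ Y) (hY : ∀ a ∈ Y, Tendsto (fun n => a (x n)) l (𝓝 (a u)))
    (hΛ : ∀ ν ∈ S.Λ, ¬ supp Δ (S.lam0 Δ - ν) ⊆ Y →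
      Tendsto (fun n => (S.lam0 Δ - ν) (x n)) l atTop) :
    Tendsto (fun n => S.mkAbar F₀ (x n)) l (𝓝 (S.mkAbar F u)) := by
  refine tendsto_nhds_mkAbar_iff.2 fun G U hU _ hmem => ?_
  obtain ⟨hFG, _, ⟨w, hw, g, hg, rfl⟩, hspan⟩ := mkAbar_mem_gamma_iff.1 hmem
  obtain ⟨Δ', Y', -, -, hG⟩ := G.2
  rw [hG] at hg hFG
  have hvanish : ∀ a ∈ Y, a (u - (w + g)) = 0 := fun a ha =>
    LinearMap.eqOn_span' (g := 0) (fun z hz => (hF ▸ hz).1 a ha) hspan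
  obtain ⟨e, he, hde⟩ := exists_tendsto_zero_eventually_sub_mem_face hΔ hYΔ
    (d := fun n => x n - (w + g))
    (fun a ha => by
      convert (hY a ha).sub_const (a (w + g)) using 2
      · exact map_sub a _ _
      · rw [← map_sub, hvanish a ha])
    (fun ν hν hs => by simpa only [map_sub, ← sub_eq_add_neg] using
      tendsto_atTop_add_const_right l (-(S.lam0 Δ - ν) (w + g)) (hΛ ν hν hs))
  have hwe : ∀ᶠ n in l, w + e n ∈ U := by
    have : Tendsto (fun n => w + e n) l (𝓝 w) := by simpa using tendsto_const_nhds.add he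
    exact this.eventually (hU.mem_nhds hw)
  filter_upwards [hwe, hde] with n hwn hdn
  refine (mkAbar_mem_gamma_iff_of_eq_zero hF₀).2
    ⟨hG ▸ zero_mem_closure_face hg, w + e n, hwn, g + (x n - (w + g) - e n), ?_, ?_⟩
  · exact hG ▸ add_mem_face hg (hFG (hF ▸ hdn))
  · dsimp only
    abel

end RootWeightSystem

/-- Let `F = F_Y^Δ ∈ Σ` and `x ∈ A_F` (with lift `u₀ ∈ A`).  A
sequence `(x_n)` of points of `A` (embedded in `Ā` via the stratum of the face
`F₀ = {0}`) converges to `x` iff `a(x_n) → a(x)` for all `a ∈ Y` and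
`(λ₀(Δ) - λ)(x_n) → ∞` for every `λ ∈ Λ` with `[λ₀(Δ) - λ] ⊄ Y`. -/
theorem tendsto_abar_iff (S : RootWeightSystem A)
    (Δ Y : Finset (Module.Dual ℝ A))
    (hΔ : S.toRootWeightData.IsBase Δ) (hY : S.toRootWeightData.Admissible Δ Y)
    (F : S.Faces) (hF : F.val = S.Face Δ Y)
    (F₀ : S.Faces) (hF₀ : F₀.val = ({0} : Set A))
    (u₀ : A) (x : ℕ → A) :
    Filter.Tendsto (fun n => S.mkAbar F₀ (x n)) Filter.atTop
        (nhds (S.mkAbar F u₀)) ↔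
      ((∀ a ∈ Y, Filter.Tendsto (fun n => a (x n)) Filter.atTop (nhds (a u₀))) ∧
        ∀ l ∈ S.Λ, ¬ supp Δ (S.lam0 Δ - l) ⊆ Y →
          Filter.Tendsto (fun n => (S.lam0 Δ - l) (x n)) Filter.atTop
            Filter.atTop) := by
  refine ⟨fun h => ⟨fun a ha => ?_, fun ν hν hs => ?_⟩, fun h => ?_⟩
  · exact RootWeightSystem.tendsto_apply_of_tendsto_mkAbar hF₀ h hΔ hY.1 hF ha
  · exact RootWeightSystem.tendsto_atTop_apply_of_tendsto_mkAbar hF₀ h hΔ hY.1 hF hν hs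
  · exact RootWeightSystem.tendsto_mkAbar_of_tendsto_apply hF₀ hΔ hY.1 hF h.1 h.2
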